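/- arXiv:1603.03509 — 2 statements merged into one kernel-verified Lean document; each statement's English description precedes it below -/
import Mathlib

section
/- Miniaturised Maclagan theorem (MM): let K be a field. For all d, l ∈ ℕ there exists M ∈ ℕ such that for every sequence I_0, …, I_M of monomial ideals in K[X_d, …, X_0, Y] with deg(I_i) ≤ l + i for all i ≤ M, there exist i < j ≤ M with I_i ⊇ I_j. -/
/-!
Maclagan's theorem: the upper sets of `ℕⁿ`, ordered by reverse inclusion, are well-quasi-ordered.
Induct on `n`. An upper set of `ℕ × α` is determined by its slices, an antitone sequence of upper
sets of `α`; by induction these are well-quasi-ordered, hence well-founded, so the sequence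
stabilises, and eventually constant antitone sequences in a well-quasi-order are
well-quasi-ordered pointwise by Higman's lemma. A monomial ideal is determined by the upper set of
its exponents. Since only finitely many monomial ideals are generated in bounded degree, bad
sequences of every finite length would glue, along an ultrafilter, into an infinite bad sequence.
-/

/-- `I` is a monomial ideal generated by monomials of total degree at most `deg`. -/
def MonGen {K : Type*} [Field K] {n : ℕ} (I : Ideal (MvPolynomial (Fin n) K)) (deg : ℕ) : Prop :=
  ∃ S : Set (Fin n →₀ ℕ), (∀ s ∈ S, (s.sum fun _ e => e) ≤ deg) ∧
    I = Ideal.span ((fun s => (MvPolynomial.monomial s (1 : K))) '' S)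

open Filter Set

theorem List.SublistForall₂.exists_getElem_of_pairwise {α : Type*} {r : α → α → Prop}
    [IsTrans α r] {l₁ l₂ : List α} (h : List.SublistForall₂ r l₁ l₂)
    (hl₂ : l₂.Pairwise fun a b => r b a) :
    ∀ k (hk : k < l₁.length), ∃ hk' : k < l₂.length, r l₁[k] l₂[k] := by
  induction h with
  | nil => simp
  | cons hab _ ih =>
    rintro (_ | k) hk
    · exact ⟨by simp, hab⟩
    · obtain ⟨hk', hr⟩ := ih hl₂.of_cons k (by simpa using hk)
      exact ⟨by simpa using hk', hr⟩
  | cons_right _ ih =>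
    intro k hk
    obtain ⟨hk', hr⟩ := ih hl₂.of_cons k hk
    have hk_succ : k + 1 < _ := Nat.succ_lt_succ hk'
    exact ⟨by simp; omega, _root_.trans hr
      (List.pairwise_iff_getElem.mp hl₂ k (k + 1) (by simp; omega) hk_succ (lt_add_one k))⟩

theorem Set.isPWO_setOf_antitone_eventuallyConst {P : Type*} [Preorder P] [WellQuasiOrderedLE P] :
    {g : ℕ → P | Antitone g ∧ EventuallyConst g atTop}.IsPWO := by
  rw [IsPWO, partiallyWellOrderedOn_iff_exists_lt]
  intro f hf
  choose N hN using fun n => eventuallyConst_atTop.mp (hf n).2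
  have hlim_le : ∀ n k, f n (N n) ≤ f n k := fun n k => by
    rcases le_total k (N n) with hk | hk
    · exact (hf n).1 hk
    · exact (hN n k hk).ge
  -- `f n` is encoded by its limit and its values before stabilising; a `SublistForall₂` embedding
  -- only moves values to later positions, where the antitone `f n` is smaller.
  obtain ⟨m, n, hmn, hlim, hlist⟩ := (PartiallyWellOrderedOn.prod
    (isPWO_of_wellQuasiOrderedLE univ) (PartiallyWellOrderedOn.partiallyWellOrderedOn_sublistForall₂
      (· ≤ ·) (isPWO_of_wellQuasiOrderedLE univ))).exists_lt
    (f := fun n => (f n (N n), (List.range (N n)).map (f n))) fun _ => ⟨trivial, fun _ _ => trivial⟩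
  refine ⟨m, n, hmn, fun k => ?_⟩
  rcases lt_or_ge k (N m) with hk | hk
  · have hpair : ((List.range (N n)).map (f n)).Pairwise fun a b => b ≤ a :=
      List.pairwise_map.mpr ((List.pairwise_lt_range).imp fun hij => (hf n).1 hij.le)
    obtain ⟨_, h⟩ := hlist.exists_getElem_of_pairwise hpair k (by simpa using hk)
    simpa using h
  · calc f m k = f m (N m) := hN m k hk
      _ ≤ f n (N n) := hlim
      _ ≤ f n k := hlim_le n k

namespace UpperSet

variable {α : Type*} [Preorder α]

def slice (U : UpperSet (ℕ × α)) (k : ℕ) : UpperSet α :=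
  ⟨(k, ·) ⁻¹' U, U.upper.preimage fun _ _ h => ⟨le_rfl, h⟩⟩

theorem antitone_slice (U : UpperSet (ℕ × α)) : Antitone U.slice :=
  fun k l hkl => coe_subset_coe.mp fun a (ha : (k, a) ∈ U) =>
    U.upper (show (k, a) ≤ (l, a) from ⟨hkl, le_rfl⟩) ha

theorem eventuallyConst_slice [WellFoundedLT (UpperSet α)] (U : UpperSet (ℕ × α)) :
    EventuallyConst U.slice atTop :=
  let ⟨N, hN⟩ := WellFoundedLT.antitone_chain_condition U.antitone_slice
  eventuallyConst_atTop.mpr ⟨N, fun k hk => (hN k hk).symm⟩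

theorem le_of_forall_slice_le {U V : UpperSet (ℕ × α)} (h : ∀ k, U.slice k ≤ V.slice k) :
    U ≤ V :=
  coe_subset_coe.mp fun x hx => coe_subset_coe.mpr (h x.1) hx

instance wellQuasiOrderedLE_nat_prod [WellQuasiOrderedLE (UpperSet α)] :
    WellQuasiOrderedLE (UpperSet (ℕ × α)) where
  wqo f :=
    let ⟨m, n, hmn, h⟩ := isPWO_setOf_antitone_eventuallyConst.exists_lt
      (f := fun n => (f n).slice) fun n => ⟨(f n).antitone_slice, (f n).eventuallyConst_slice⟩
    ⟨m, n, hmn, le_of_forall_slice_le h⟩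

instance wellQuasiOrderedLE_fin_arrow_nat : ∀ n, WellQuasiOrderedLE (UpperSet (Fin n → ℕ))
  | 0 =>
    have : Finite (UpperSet (Fin 0 → ℕ)) := Finite.of_injective _ SetLike.coe_injective
    Finite.to_wellQuasiOrderedLE
  | n + 1 =>
    have := wellQuasiOrderedLE_fin_arrow_nat n
    (map (Fin.consOrderIso fun _ => ℕ)).wellQuasiOrderedLE_iff.mp inferInstance

instance wellQuasiOrderedLE_finsupp_nat {σ : Type*} [Finite σ] :
    WellQuasiOrderedLE (UpperSet (σ →₀ ℕ)) :=
  let ⟨n, ⟨e⟩⟩ := Finite.exists_equiv_fin σ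
  let toFin : (σ →₀ ℕ) ≃o (Fin n → ℕ) := Finsupp.orderIsoFunOnFinite.trans
    { toEquiv := e.arrowCongr (Equiv.refl ℕ)
      map_rel_iff' := fun {f g} => e.symm.forall_congr_right (q := fun s => f s ≤ g s) }
  (map toFin).wellQuasiOrderedLE_iff.mpr inferInstance

end UpperSet

theorem Set.PartiallyWellOrderedOn.exists_bound_of_finite {β : Type*} {r : β → β → Prop}
    {F : ℕ → Set β} (hr : (⋃ i, F i).PartiallyWellOrderedOn r) (hF : ∀ i, (F i).Finite) :
    ∃ M, ∀ W : ℕ → β, (∀ i ≤ M, W i ∈ F i) → ∃ i j, i < j ∧ j ≤ M ∧ r (W i) (W j) := by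
  by_contra! hbad
  choose W hWF hWbad using hbad
  let 𝒰 : Ultrafilter ℕ := .of atTop
  have hlarge : ∀ i, ∀ᶠ M in (𝒰 : Filter ℕ), i ≤ M := fun i =>
    Ultrafilter.of_le atTop (eventually_ge_atTop i)
  have hlimit : ∀ i, ∃ v ∈ F i, ∀ᶠ M in (𝒰 : Filter ℕ), W M i = v := fun i => by
    obtain ⟨v, hv, hpure⟩ := Ultrafilter.eq_pure_of_finite_mem (f := 𝒰.map fun M => W M i) (hF i)
      ((hlarge i).mono fun M hM => hWF M i hM)
    have : {v} ∈ 𝒰.map fun M => W M i := by simp [hpure]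
    exact ⟨v, hv, this⟩
  choose v hvF hvW using hlimit
  obtain ⟨i, j, hij, hvij⟩ := hr.exists_lt (f := v) fun i => mem_iUnion_of_mem i (hvF i)
  obtain ⟨M, hjM, hMi, hMj⟩ := ((hlarge j).and ((hvW i).and (hvW j))).exists
  exact hWbad M i j hij hjM (hMi ▸ hMj ▸ hvij)

namespace MvPolynomial

variable {σ R : Type*} [CommSemiring R]

def monomialExponents (I : Ideal (MvPolynomial σ R)) : UpperSet (σ →₀ ℕ) :=
  ⟨{s | monomial s 1 ∈ I}, fun s t hst (hs : monomial s 1 ∈ I) => by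
    show monomial t 1 ∈ I
    rw [← tsub_add_cancel_of_le hst, ← one_mul (1 : R), ← monomial_mul]
    exact I.mul_mem_left _ hs⟩

theorem span_monomial_le_of_monomialExponents_le {I : Ideal (MvPolynomial σ R)}
    {S : Set (σ →₀ ℕ)}
    (h : monomialExponents I ≤ monomialExponents (Ideal.span ((monomial · (1 : R)) '' S))) :
    Ideal.span ((monomial · (1 : R)) '' S) ≤ I :=
  Ideal.span_le.mpr <| Set.image_subset_iff.mpr fun _ hs =>
    UpperSet.coe_subset_coe.mpr h (Ideal.subset_span (Set.mem_image_of_mem _ hs))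

theorem partiallyWellOrderedOn_range_span_monomial [Finite σ] :
    (Set.range fun S : Set (σ →₀ ℕ) => Ideal.span ((monomial · (1 : R)) '' S)
      ).PartiallyWellOrderedOn (fun I J => J ≤ I) := by
  rw [Set.partiallyWellOrderedOn_iff_exists_lt]
  intro f hf
  choose S hS using hf
  obtain ⟨m, n, hmn, h⟩ := wellQuasiOrdered_le fun n => monomialExponents (f n)
  refine ⟨m, n, hmn, ?_⟩
  rw [← hS n, ← hS m] at h ⊢
  exact span_monomial_le_of_monomialExponents_le h

end MvPolynomial

theorem finite_setOf_monGen (K : Type*) [Field K] (n deg : ℕ) :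
    {I : Ideal (MvPolynomial (Fin n) K) | MonGen I deg}.Finite :=
  ((Finsupp.finite_of_degree_le deg).finite_subsets.image
    fun S => Ideal.span ((MvPolynomial.monomial · (1 : K)) '' S)).subset
      fun _ ⟨S, hS, hI⟩ => ⟨S, hS, hI.symm⟩

/-- Miniaturised Maclagan theorem (MM): for all `d, l` there is `M` such that every
sequence `I_0, …, I_M` of monomial ideals in `K[X_d, …, X_0, Y]` with
`deg (I i) ≤ l + i` admits `i < j ≤ M` with `I i ⊇ I j`. -/
theorem miniaturisedMaclagan (K : Type*) [Field K] (d l : ℕ) :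
    ∃ M : ℕ, ∀ I : ℕ → Ideal (MvPolynomial (Fin (d + 2)) K),
      (∀ i ≤ M, MonGen (I i) (l + i)) →
      ∃ i j, i < j ∧ j ≤ M ∧ I j ≤ I i := by
  have hmonomial : (⋃ i, {I : Ideal (MvPolynomial (Fin (d + 2)) K) | MonGen I (l + i)}) ⊆
      range fun S => Ideal.span ((MvPolynomial.monomial · 1) '' S) := fun _ hI =>
    let ⟨_, S, _, hIS⟩ := mem_iUnion.mp hI
    ⟨S, hIS.symm⟩
  exact (MvPolynomial.partiallyWellOrderedOn_range_span_monomial.mono hmonomial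
    ).exists_bound_of_finite fun i => finite_setOf_monGen K _ (l + i)
end

section
/- Let K be a field and let B : ℕ → ℕ be strictly increasing with B(l) > 2^{l+2} for all l. Define B^{-1}(i) = max({j : B(j) ≤ i} ∪ {0}) and f : ℕ → ℕ by f(i) = max({j : 2^{(j^{B^{-1}(i)})} ≤ i} ∪ {0}). Then for all d and all l > d + 2: M_d^f(l) < 2^{B(l)^{d+2}}. Concretely, every sequence I_0, …, I_R of monomial ideals in K[X_d, …, X_0, Y] with R = 2^{B(l)^{d+2}} and deg(I_i) ≤ l + f(i) for all i ≤ R contains indices i < j with I_i ⊇ I_j. -/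
/-- `Mnum K d f l` : the least `M` (infimum of the set of such `M`) such that every
sequence `I_0, …, I_M` of monomial ideals in the `d+2`-variable polynomial ring over `K`
with `deg (I i) ≤ l + f i` for all `i ≤ M` admits `i < j ≤ M` with `I j ⊆ I i`. -/
noncomputable def Mnum (K : Type*) [Field K] (d : ℕ) (f : ℕ → ℕ) (l : ℕ) : ℕ :=
  sInf {M | ∀ I : ℕ → Ideal (MvPolynomial (Fin (d + 2)) K),
    (∀ i ≤ M, MonGen (I i) (l + f i)) →
    ∃ i j, i < j ∧ j ≤ M ∧ I j ≤ I i}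

/-- `B⁻¹ i = max ({j | B j ≤ i} ∪ {0})`. -/
noncomputable def Binv (B : ℕ → ℕ) (i : ℕ) : ℕ := sSup ({j | B j ≤ i} ∪ {0})

/-- `f i = max ({j | 2^{j^{B⁻¹ i}} ≤ i} ∪ {0})`, i.e. `f i = ⌊(log₂ i)^{1/B⁻¹(i)}⌋`. -/
noncomputable def fpar (B : ℕ → ℕ) (i : ℕ) : ℕ := sSup ({j | 2 ^ j ^ Binv B i ≤ i} ∪ {0})

/-!
For `i ≤ 2 ^ B(l) ^ (d + 2)` one has `2 f(i) ≤ B(l)`: if `i < B(l)` because `2 ^ f(i) ≤ i`, and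
otherwise because `B⁻¹(i) ≥ l > d + 2` gives `f(i) ^ (d + 3) ≤ f(i) ^ B⁻¹(i) ≤ B(l) ^ (d + 2)`.
Hence every ideal of the sequence is generated by a subset of the fewer than `B(l) ^ (d + 2)`
monomials of degree `≤ B(l) - 2`, so fewer than `2 ^ B(l) ^ (d + 2)` ideals occur and two of
them coincide.
-/

open Finset

section MonomialIdeals

variable {K : Type*} [Field K] {n : ℕ}

theorem MonGen.mono {I : Ideal (MvPolynomial (Fin n) K)} {a b : ℕ} (h : MonGen I a)
    (hab : a ≤ b) : MonGen I b :=
  let ⟨S, hS, hI⟩ := h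
  ⟨S, fun s hs => (hS s hs).trans hab, hI⟩

theorem card_toFinset_degree_le_le (n D : ℕ) :
    #(Finsupp.finite_of_degree_le (σ := Fin n) D).toFinset ≤ (D + 1) ^ n := by
  calc #(Finsupp.finite_of_degree_le (σ := Fin n) D).toFinset
      ≤ #(Fintype.piFinset fun _ : Fin n => range (D + 1)) := by
        refine card_le_card_of_injOn (fun s => ⇑s) (fun s hs => ?_)
          (fun s _ t _ hst => DFunLike.coe_injective hst)
        simp only [Set.Finite.coe_toFinset, Set.mem_ofPred_eq] at hs
        simpa [Nat.lt_succ_iff] using fun x => (Finsupp.le_degree x s).trans hs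
    _ = (D + 1) ^ n := by simp

theorem exists_finset_card_le_of_monGen (K : Type*) [Field K] (n D : ℕ) :
    ∃ T : Finset (Ideal (MvPolynomial (Fin n) K)), #T ≤ 2 ^ (D + 1) ^ n ∧
      ∀ I, MonGen I D → I ∈ T := by
  classical
  set E := (Finsupp.finite_of_degree_le (σ := Fin n) D).toFinset
  refine ⟨E.powerset.image fun S : Finset (Fin n →₀ ℕ) =>
    Ideal.span ((fun s => MvPolynomial.monomial s 1) '' (S : Set (Fin n →₀ ℕ))),
    ?_, ?_⟩
  · calc _ ≤ #E.powerset := card_image_le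
      _ = 2 ^ #E := card_powerset E
      _ ≤ 2 ^ (D + 1) ^ n := Nat.pow_le_pow_right two_pos (card_toFinset_degree_le_le n D)
  · rintro I ⟨S, hS, rfl⟩
    refine mem_image.2 ⟨E.filter (· ∈ S), mem_powerset.2 (filter_subset _ _), ?_⟩
    congr
    ext s
    simp only [E, coe_filter, Set.Finite.mem_toFinset, Set.mem_ofPred_eq, and_iff_right_iff_imp]
    exact hS s

theorem exists_lt_eq_of_monGen {D M : ℕ} (I : ℕ → Ideal (MvPolynomial (Fin n) K))
    (hI : ∀ i ≤ M, MonGen (I i) D) (hM : 2 ^ (D + 1) ^ n ≤ M) :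
    ∃ i j, i < j ∧ j ≤ M ∧ I j = I i := by
  obtain ⟨T, hT, hIT⟩ := exists_finset_card_le_of_monGen K n D
  obtain ⟨i, hi, j, hj, hij, hIij⟩ := exists_ne_map_eq_of_card_lt_of_maps_to
    (s := range (M + 1)) (by rw [card_range]; omega)
    (fun i hi => hIT (I i) (hI i (Nat.lt_succ_iff.1 (mem_range.1 hi))))
  simp only [mem_range] at hi hj
  rcases hij.lt_or_gt with h | h
  · exact ⟨i, j, h, by omega, hIij.symm⟩
  · exact ⟨j, i, h, by omega, hIij⟩

end MonomialIdeals

theorem sSup_union_zero_mem (s : Set ℕ) : sSup (s ∪ {0}) ∈ s ∪ {0} := by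
  by_cases h : BddAbove (s ∪ {0})
  · exact Nat.sSup_mem ⟨0, Or.inr rfl⟩ h
  · exact Or.inr (Nat.sSup_of_not_bddAbove h)

theorem two_mul_le_of_pow_succ_le {F b e : ℕ} (h : F ^ (e + 1) ≤ b ^ e) (hb : 2 ^ (e + 1) ≤ b) :
    2 * F ≤ b := by
  by_contra! hlt
  have : b ^ (e + 1) < b ^ (e + 1) :=
    calc b ^ (e + 1) < (2 * F) ^ (e + 1) := Nat.pow_lt_pow_left hlt e.succ_ne_zero
      _ = 2 ^ (e + 1) * F ^ (e + 1) := mul_pow 2 F (e + 1)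
      _ ≤ b * b ^ e := Nat.mul_le_mul hb h
      _ = b ^ (e + 1) := (pow_succ' b e).symm
  exact this.false

section Fpar

variable {B : ℕ → ℕ}

theorem le_Binv (hB : StrictMono B) {i j : ℕ} (h : B j ≤ i) : j ≤ Binv B i :=
  le_csSup ⟨i, by rintro k (hk | rfl); exacts [hB.le_apply.trans hk, Nat.zero_le i]⟩ (Or.inl h)

theorem fpar_eq_zero_of_Binv_eq_zero {i : ℕ} (h : Binv B i = 0) : fpar B i = 0 := by
  rw [fpar, h]
  by_cases hi : 2 ≤ i
  · refine Nat.sSup_of_not_bddAbove fun ⟨b, hb⟩ => ?_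
    exact (b.lt_succ_self).not_ge (hb (Or.inl (by simpa using hi)))
  · simp [hi]

theorem two_pow_fpar_pow_Binv_le {i : ℕ} (h : fpar B i ≠ 0) : 2 ^ fpar B i ^ Binv B i ≤ i :=
  (sSup_union_zero_mem _).resolve_right h

theorem two_mul_fpar_le_of_ne_zero {i : ℕ} (h : fpar B i ≠ 0) : 2 * fpar B i ≤ i :=
  calc 2 * fpar B i ≤ 2 ^ fpar B i := Nat.mul_le_pow (by norm_num) _
    _ ≤ 2 ^ fpar B i ^ Binv B i := Nat.pow_le_pow_right two_pos
        (Nat.le_self_pow (mt fpar_eq_zero_of_Binv_eq_zero h) _)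
    _ ≤ i := two_pow_fpar_pow_Binv_le h

theorem two_mul_fpar_le (hB : StrictMono B) {e l i : ℕ} (hel : e < l) (hBl : 2 ^ (e + 1) ≤ B l)
    (hi : i ≤ 2 ^ B l ^ e) : 2 * fpar B i ≤ B l := by
  by_cases hF : fpar B i = 0
  · simp [hF]
  rcases lt_or_ge i (B l) with hiB | hiB
  · exact (two_mul_fpar_le_of_ne_zero hF).trans hiB.le
  refine two_mul_le_of_pow_succ_le ?_ hBl
  calc fpar B i ^ (e + 1) ≤ fpar B i ^ Binv B i :=
        Nat.pow_le_pow_right (Nat.pos_of_ne_zero hF) (hel.trans_le (le_Binv hB hiB))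
    _ ≤ B l ^ e :=
        (Nat.pow_le_pow_iff_right one_lt_two).1 ((two_pow_fpar_pow_Binv_le hF).trans hi)

end Fpar

/-- For strictly increasing `B` with `B l > 2^{l+2}` and `l > d + 2`:
`M_d^f(l) < 2^{B(l)^{d+2}}`; concretely, every sequence `I_0, …, I_R` of monomial
ideals with `R = 2^{B(l)^{d+2}}` and `deg (I i) ≤ l + f i` contains `i < j` with
`I i ⊇ I j`. -/
theorem upperBound_slow (K : Type*) [Field K] (B : ℕ → ℕ) (hB : StrictMono B)
    (hB2 : ∀ l, 2 ^ (l + 2) < B l) (d l : ℕ) (hl : d + 2 < l) :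
    Mnum K d (fpar B) l < 2 ^ (B l) ^ (d + 2) ∧
    ∀ I : ℕ → Ideal (MvPolynomial (Fin (d + 2)) K),
      (∀ i ≤ 2 ^ (B l) ^ (d + 2), MonGen (I i) (l + fpar B i)) →
      ∃ i j, i < j ∧ j ≤ 2 ^ (B l) ^ (d + 2) ∧ I j ≤ I i := by
  set R := 2 ^ (B l) ^ (d + 2)
  have hBl := hB2 l
  have hl2 : 2 * (l + 2) ≤ 2 ^ (l + 2) := by
    rw [pow_succ']; exact Nat.mul_le_mul_left 2 Nat.lt_two_pow_self
  have hd2 : 2 ^ (d + 2 + 1) ≤ 2 ^ (l + 2) := Nat.pow_le_pow_right two_pos (by omega)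
  have hdeg : ∀ i ≤ R, l + fpar B i ≤ B l - 2 := fun i hi => by
    have := two_mul_fpar_le hB (e := d + 2) (by omega) (by omega) hi
    omega
  have hR : 2 ^ (B l - 2 + 1) ^ (d + 2) < R :=
    Nat.pow_lt_pow_right one_lt_two (Nat.pow_lt_pow_left (by omega) (by omega))
  have hpigeon : ∀ M ≤ R, 2 ^ (B l - 2 + 1) ^ (d + 2) ≤ M →
      ∀ I : ℕ → Ideal (MvPolynomial (Fin (d + 2)) K), (∀ i ≤ M, MonGen (I i) (l + fpar B i)) →
        ∃ i j, i < j ∧ j ≤ M ∧ I j ≤ I i := fun M hMR hM I hI =>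
    let ⟨i, j, hij, hj, hIij⟩ :=
      exists_lt_eq_of_monGen I (fun i hi => (hI i hi).mono (hdeg i (hi.trans hMR))) hM
    ⟨i, j, hij, hj, hIij.le⟩
  have hM : Mnum K d (fpar B) l ≤ 2 ^ (B l - 2 + 1) ^ (d + 2) :=
    Nat.sInf_le (hpigeon _ hR.le le_rfl)
  exact ⟨hM.trans_lt hR, hpigeon R le_rfl hR.le⟩
end
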